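/- Let a, b, ε > 0 with a + ε < b. Then there exist C > 0 and δ₀ > 0 such that for every δ ∈ (0, δ₀] and every w ≥ 0: 2b ∫_{(b/(b−a−ε))w + 1/δ}^{∞} v e^{ε v²} e^{a v²} e^{−b v²} e^{−b w²} I₀(2 b v w) dv ≤ C e^{−(b−a−ε)/(4δ²)} · (b/(b−a−ε)) · exp( ((a+ε)b/(b−a−ε)) w² ). -/

import Mathlib

open MeasureTheory

/-- The modified Bessel function `I₀(y) = (1/π) ∫₀^π e^{y cos φ} dφ`. -/
noncomputable def besselI0 (y : ℝ) : ℝ :=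
  (1 / Real.pi) * ∫ φ in (0:ℝ)..Real.pi, Real.exp (y * Real.cos φ)

/-!
Completing the square, `(a + ε - b) v² - b w² + 2 b v w = B w² - c (v - s)²` with
`c = b - a - ε`, `s = b w / c` and `B = (a + ε) b / c`, so with `y = 2 b v w` the integrand is
`v I₀(y) e^{-y} · e^{B w²} e^{-c (v - s)²}`. The bounds `I₀(y) ≤ e^y` and `I₀(y) ≤ e^y / √y`
give `v I₀(y) e^{-y} ≤ (2 + 1/√c) (v - s)` as soon as `v - s ≥ 1`, and `(v - s) e^{-c (v - s)²}`
integrates over `v > s + 1/δ` to exactly `e^{-c/δ²} / (2c)`.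
-/

open Filter Topology Set Real

lemma besselI0_nonneg (y : ℝ) : 0 ≤ besselI0 y :=
  mul_nonneg (by positivity) <|
    intervalIntegral.integral_nonneg pi_pos.le fun _ _ ↦ (exp_pos _).le

lemma besselI0_le_exp {y : ℝ} (hy : 0 ≤ y) : besselI0 y ≤ exp y := by
  have h : ∫ φ in (0:ℝ)..π, exp (y * cos φ) ≤ ∫ _ in (0:ℝ)..π, exp y := by
    refine intervalIntegral.integral_mono_on pi_pos.le
      (Continuous.intervalIntegrable (by fun_prop) _ _)
      (Continuous.intervalIntegrable (by fun_prop) _ _) fun φ _ ↦ ?_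
    exact exp_le_exp.2 (mul_le_of_le_one_right hy (cos_le_one φ))
  rw [intervalIntegral.integral_const, smul_eq_mul, sub_zero] at h
  calc besselI0 y ≤ 1 / π * (π * exp y) := by unfold besselI0; gcongr
    _ = exp y := by field_simp

lemma besselI0_le_exp_div_sqrt {y : ℝ} (hy : 0 < y) : besselI0 y ≤ exp y / √y := by
  set α : ℝ := 2 * y / π ^ 2
  have hα : 0 < α := by positivity
  -- `cos φ ≤ 1 - 2φ²/π²` on `[0, π]` turns the integrand into a Gaussian
  have hcos : ∀ φ ∈ Icc (0:ℝ) π, exp (y * cos φ) ≤ exp y * exp (-α * φ ^ 2) := by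
    intro φ hφ
    rw [← exp_add]
    have := cos_le_one_sub_mul_cos_sq (abs_le.2 ⟨by linarith [pi_pos, hφ.1], hφ.2⟩)
    have hαφ : α * φ ^ 2 = y * (2 / π ^ 2 * φ ^ 2) := by simp only [α]; ring
    exact exp_le_exp.2 (by nlinarith [mul_le_mul_of_nonneg_left this hy.le])
  have hgauss : ∫ φ in (0:ℝ)..π, exp (-α * φ ^ 2) ≤ √(π / α) / 2 := by
    rw [intervalIntegral.integral_of_le pi_pos.le, ← integral_gaussian_Ioi]
    exact setIntegral_mono_set (integrable_exp_neg_mul_sq hα).integrableOn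
      (.of_forall fun _ ↦ (exp_pos _).le) (.of_forall fun _ hx ↦ hx.1)
  have hconst : 1 / π * (√(π / α) / 2) ≤ 1 / √y := by
    have : 1 / π * (√(π / α) / 2) = √(π / 8) / √y := by
      have : π / α = (2 * π) ^ 2 * (π / 8) / y := by simp only [α]; field_simp; ring
      rw [this, sqrt_div' _ hy.le, sqrt_mul (by positivity), sqrt_sq (by positivity)]
      field_simp
    rw [this]
    gcongr
    rw [sqrt_le_one]
    linarith [pi_le_four]
  calc besselI0 y ≤ 1 / π * ∫ φ in (0:ℝ)..π, exp y * exp (-α * φ ^ 2) := by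
        unfold besselI0
        gcongr
        exact intervalIntegral.integral_mono_on pi_pos.le
          (Continuous.intervalIntegrable (by fun_prop) _ _)
          (Continuous.intervalIntegrable (by fun_prop) _ _) hcos
    _ = exp y * (1 / π * ∫ φ in (0:ℝ)..π, exp (-α * φ ^ 2)) := by
        rw [intervalIntegral.integral_const_mul]; ring
    _ ≤ exp y * (1 / √y) := by
        gcongr
        exact (mul_le_mul_of_nonneg_left hgauss (by positivity)).trans hconst
    _ = exp y / √y := by ring

-- For `v ≥ 2s` the factor `v` is absorbed by `v - s`, otherwise by the decay `1/√y` of `I₀`.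
lemma mul_besselI0_le {c s v : ℝ} (hc : 0 < c) (hs : 0 ≤ s) (hv : 1 ≤ v - s) :
    v * besselI0 (2 * c * s * v) ≤ (2 + (√c)⁻¹) * (v - s) * exp (2 * c * s * v) := by
  have hv0 : 0 < v := by linarith
  have hc' : 0 ≤ (√c)⁻¹ := by positivity
  rcases le_or_gt (2 * s) v with hsv | hsv
  · calc v * besselI0 (2 * c * s * v) ≤ (2 * (v - s)) * exp (2 * c * s * v) :=
          mul_le_mul (by linarith) (besselI0_le_exp (by positivity)) (besselI0_nonneg _)
            (by linarith)
      _ ≤ (2 + (√c)⁻¹) * (v - s) * exp (2 * c * s * v) := by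
          gcongr; linarith
  · have hy : 0 < 2 * c * s * v := by
      have : 0 < s := by linarith
      positivity
    have hvy : v / √(2 * c * s * v) ≤ (√c)⁻¹ := by
      rw [div_le_iff₀ (sqrt_pos.2 hy), ← sqrt_inv, ← sqrt_mul (inv_nonneg.2 hc.le)]
      refine le_sqrt_of_sq_le ?_
      rw [le_inv_mul_iff₀ hc]
      nlinarith
    calc v * besselI0 (2 * c * s * v)
        ≤ v / √(2 * c * s * v) * exp (2 * c * s * v) := by
          rw [div_mul_eq_mul_div, mul_div_assoc]
          exact mul_le_mul_of_nonneg_left (besselI0_le_exp_div_sqrt hy) hv0.le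
      _ ≤ (√c)⁻¹ * (v - s) * exp (2 * c * s * v) := by
          gcongr
          exact hvy.trans (le_mul_of_one_le_right hc' hv)
      _ ≤ (2 + (√c)⁻¹) * (v - s) * exp (2 * c * s * v) := by
          gcongr; linarith

lemma hasDerivAt_exp_neg_mul_sq_sub {c : ℝ} (hc : c ≠ 0) (s x : ℝ) :
    HasDerivAt (fun v ↦ -exp (-c * (v - s) ^ 2) / (2 * c))
      ((x - s) * exp (-c * (x - s) ^ 2)) x := by
  have h := ((((hasDerivAt_id' x).sub_const s).pow 2).const_mul (-c)).exp.neg.div_const (2 * c)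
  refine h.congr_deriv ?_
  simp only [Pi.pow_apply]
  field_simp
  ring

lemma tendsto_exp_neg_mul_sq_sub {c : ℝ} (hc : 0 < c) (s : ℝ) :
    Tendsto (fun v ↦ -exp (-c * (v - s) ^ 2) / (2 * c)) atTop (𝓝 0) := by
  have h : Tendsto (fun v : ℝ ↦ -c * (v - s) ^ 2) atTop atBot :=
    (tendsto_const_mul_atBot_of_neg (neg_neg_of_pos hc)).2 <|
      (tendsto_pow_atTop two_ne_zero).comp (tendsto_atTop_add_const_right _ (-s) tendsto_id)
  simpa using (tendsto_exp_atBot.comp h).neg.div_const (2 * c)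

lemma sub_mul_exp_nonneg_of_mem_Ioi (c s : ℝ) {t : ℝ} (ht : 0 ≤ t) :
    ∀ v ∈ Ioi (s + t), 0 ≤ (v - s) * exp (-c * (v - s) ^ 2) :=
  fun v hv ↦ mul_nonneg (by linarith [mem_Ioi.1 hv]) (exp_pos _).le

lemma integrableOn_Ioi_sub_mul_exp_neg_mul_sq {c : ℝ} (hc : 0 < c) (s : ℝ) {t : ℝ}
    (ht : 0 ≤ t) :
    IntegrableOn (fun v ↦ (v - s) * exp (-c * (v - s) ^ 2)) (Ioi (s + t)) :=
  integrableOn_Ioi_deriv_of_nonneg' (fun x _ ↦ hasDerivAt_exp_neg_mul_sq_sub hc.ne' s x)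
    (sub_mul_exp_nonneg_of_mem_Ioi c s ht) (tendsto_exp_neg_mul_sq_sub hc s)

lemma integral_Ioi_sub_mul_exp_neg_mul_sq {c : ℝ} (hc : 0 < c) (s : ℝ) {t : ℝ}
    (ht : 0 ≤ t) :
    ∫ v in Ioi (s + t), (v - s) * exp (-c * (v - s) ^ 2) = exp (-c * t ^ 2) / (2 * c) := by
  rw [integral_Ioi_of_hasDerivAt_of_nonneg' (fun x _ ↦ hasDerivAt_exp_neg_mul_sq_sub hc.ne' s x)
    (sub_mul_exp_nonneg_of_mem_Ioi c s ht) (tendsto_exp_neg_mul_sq_sub hc s)]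
  ring_nf

lemma gaussian_bessel_integrand_le {a b ε w v : ℝ} (hb : 0 < b) (hc : 0 < b - a - ε)
    (hw : 0 ≤ w) (hv : 1 ≤ v - b * w / (b - a - ε)) :
    v * exp (ε * v ^ 2) * exp (a * v ^ 2) * exp (-b * v ^ 2) * exp (-b * w ^ 2) *
        besselI0 (2 * b * v * w)
      ≤ (2 + (√(b - a - ε))⁻¹) * exp ((a + ε) * b / (b - a - ε) * w ^ 2) *
        ((v - b * w / (b - a - ε)) * exp (-(b - a - ε) * (v - b * w / (b - a - ε)) ^ 2)) := by
  set c := b - a - ε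
  set s := b * w / c
  have hy : 2 * b * v * w = 2 * c * s * v := by simp only [s]; field_simp
  have hsq : exp (ε * v ^ 2) * exp (a * v ^ 2) * exp (-b * v ^ 2) * exp (-b * w ^ 2) *
      exp (2 * c * s * v) = exp ((a + ε) * b / c * w ^ 2) * exp (-c * (v - s) ^ 2) := by
    have hc0 : c ≠ 0 := hc.ne'
    simp only [← exp_add, s]
    congr 1
    field_simp
    simp only [c]
    ring
  calc v * exp (ε * v ^ 2) * exp (a * v ^ 2) * exp (-b * v ^ 2) * exp (-b * w ^ 2) *
        besselI0 (2 * b * v * w)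
      = v * besselI0 (2 * c * s * v) *
          (exp (ε * v ^ 2) * exp (a * v ^ 2) * exp (-b * v ^ 2) * exp (-b * w ^ 2)) := by
        rw [hy]; ring
    _ ≤ (2 + (√c)⁻¹) * (v - s) * exp (2 * c * s * v) *
          (exp (ε * v ^ 2) * exp (a * v ^ 2) * exp (-b * v ^ 2) * exp (-b * w ^ 2)) :=
        mul_le_mul_of_nonneg_right (mul_besselI0_le hc (by positivity) hv) (by positivity)
    _ = (2 + (√c)⁻¹) * (v - s) * (exp (ε * v ^ 2) * exp (a * v ^ 2) * exp (-b * v ^ 2) *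
          exp (-b * w ^ 2) * exp (2 * c * s * v)) := by ring
    _ = (2 + (√c)⁻¹) * exp ((a + ε) * b / c * w ^ 2) *
          ((v - s) * exp (-c * (v - s) ^ 2)) := by
        rw [hsq]; ring

theorem gaussian_bessel_integral_tail_general (a b ε : ℝ) (hb : 0 < b)
    (hab : a + ε < b) :
    ∃ C > 0, ∃ δ₀ > 0, ∀ δ : ℝ, 0 < δ → δ ≤ δ₀ → ∀ w : ℝ, 0 ≤ w →
      2 * b * ∫ v in Set.Ioi ((b / (b - a - ε)) * w + 1 / δ),
          v * Real.exp (ε * v ^ 2) * Real.exp (a * v ^ 2) * Real.exp (-b * v ^ 2) *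
            Real.exp (-b * w ^ 2) * besselI0 (2 * b * v * w)
        ≤ C * Real.exp (-(b - a - ε) / (4 * δ ^ 2)) *
            ((b / (b - a - ε)) * Real.exp ((a + ε) * b / (b - a - ε) * w ^ 2)) := by
  have hc : 0 < b - a - ε := by linarith
  refine ⟨2 + (√(b - a - ε))⁻¹, by positivity, 1, one_pos, fun δ hδ hδ₀ w hw ↦ ?_⟩
  set c := b - a - ε
  set s := b * w / c
  have ht : 1 ≤ 1 / δ := by rw [le_div_iff₀ hδ]; linarith
  have hdecay : exp (-c * (1 / δ) ^ 2) ≤ exp (-c / (4 * δ ^ 2)) := by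
    rw [exp_le_exp, one_div, inv_pow, ← div_eq_mul_inv, neg_div, neg_div, neg_le_neg_iff]
    exact div_le_div_of_nonneg_left hc.le (by positivity) (by nlinarith)
  rw [show b / c * w + 1 / δ = s + 1 / δ by ring]
  calc 2 * b * ∫ v in Ioi (s + 1 / δ), v * exp (ε * v ^ 2) * exp (a * v ^ 2) *
          exp (-b * v ^ 2) * exp (-b * w ^ 2) * besselI0 (2 * b * v * w)
      ≤ 2 * b * ∫ v in Ioi (s + 1 / δ), (2 + (√c)⁻¹) * exp ((a + ε) * b / c * w ^ 2) *
          ((v - s) * exp (-c * (v - s) ^ 2)) := by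
        refine mul_le_mul_of_nonneg_left (integral_mono_of_nonneg ?_
          ((integrableOn_Ioi_sub_mul_exp_neg_mul_sq hc s (by positivity)).const_mul _) ?_)
          (by positivity)
        all_goals filter_upwards [ae_restrict_mem measurableSet_Ioi] with v (hv : s + 1 / δ < v)
        · have : 0 < v := by linarith [show 0 ≤ s by positivity]
          have := besselI0_nonneg (2 * b * v * w)
          positivity
        · exact gaussian_bessel_integrand_le hb hc hw (by linarith)
    _ = (2 + (√c)⁻¹) * exp (-c * (1 / δ) ^ 2) * (b / c * exp ((a + ε) * b / c * w ^ 2)) := by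
        rw [integral_const_mul, integral_Ioi_sub_mul_exp_neg_mul_sq hc s (by positivity)]
        field_simp
    _ ≤ _ := by gcongr

/-- Tail estimate for the Gaussian–Bessel integral: for `a, b, ε > 0` with `a + ε < b`
there exist `C > 0` and `δ₀ > 0` such that for every `0 < δ ≤ δ₀` and every `w ≥ 0`,
`2b ∫_{(b/(b−a−ε))w + 1/δ}^∞ v e^{εv²} e^{av²} e^{−bv²} e^{−bw²} I₀(2bvw) dv
  ≤ C e^{−(b−a−ε)/(4δ²)} · (b/(b−a−ε)) · exp(((a+ε)b/(b−a−ε)) w²)`. -/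
theorem gaussian_bessel_integral_tail (a b ε : ℝ) (ha : 0 < a) (hb : 0 < b) (hε : 0 < ε)
    (hab : a + ε < b) :
    ∃ C > 0, ∃ δ₀ > 0, ∀ δ : ℝ, 0 < δ → δ ≤ δ₀ → ∀ w : ℝ, 0 ≤ w →
      2 * b * ∫ v in Set.Ioi ((b / (b - a - ε)) * w + 1 / δ),
          v * Real.exp (ε * v ^ 2) * Real.exp (a * v ^ 2) * Real.exp (-b * v ^ 2) *
            Real.exp (-b * w ^ 2) * besselI0 (2 * b * v * w)
        ≤ C * Real.exp (-(b - a - ε) / (4 * δ ^ 2)) *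
            ((b / (b - a - ε)) * Real.exp ((a + ε) * b / (b - a - ε) * w ^ 2)) :=
  gaussian_bessel_integral_tail_general a b ε hb hab
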